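/- Let G be a factorizable finite simple graph, M a perfect matching of G, G1 a factor-component of G, and X ⊆ V(G) a critical-inducing set for G1. Suppose there exists an M-ear P relative to X, and let I1, …, Is (s ≥ 1) be the factor-components of G that contain internal vertices of P. Then X ∪ V(I1) ∪ ⋯ ∪ V(Is) is also a critical-inducing set for G1. -/

import Mathlib

open SimpleGraph

variable {V : Type*}

/-- A set of edges is pairwise vertex-disjoint. -/
def DisjointEdges (N : Set (Sym2 V)) : Prop :=
  ∀ e ∈ N, ∀ f ∈ N, e ≠ f → ∀ x : V, x ∈ e → x ∉ f

/-- `M` is a matching of `G`: a set of pairwise vertex-disjoint edges of `G`. -/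
def IsMatchingSet (G : SimpleGraph V) (M : Set (Sym2 V)) : Prop :=
  M ⊆ G.edgeSet ∧ DisjointEdges M

/-- `M` is a perfect matching of `G`: a matching covering every vertex. -/
def IsPerfectMatchingSet (G : SimpleGraph V) (M : Set (Sym2 V)) : Prop :=
  IsMatchingSet G M ∧ ∀ v : V, ∃ e ∈ M, v ∈ e

/-- `M` is a near-perfect matching of `G` whose unique exposed vertex is `v`. -/
def IsNearPerfectMatchingSet (G : SimpleGraph V) (M : Set (Sym2 V)) (v : V) : Prop :=
  IsMatchingSet G M ∧ (∀ e ∈ M, v ∉ e) ∧ ∀ u : V, u ≠ v → ∃ e ∈ M, u ∈ e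

/-- The induced subgraph `G[X]` has a perfect matching. -/
def HasPMOn (G : SimpleGraph V) (X : Set V) : Prop :=
  ∃ M : Set (Sym2 V), IsMatchingSet G M ∧ (∀ e ∈ M, ∀ x : V, x ∈ e → x ∈ X) ∧
    ∀ v ∈ X, ∃ e ∈ M, v ∈ e

/-- `G` is factorizable: it has a perfect matching. -/
def Factorizable (G : SimpleGraph V) : Prop :=
  ∃ M : Set (Sym2 V), IsPerfectMatchingSet G M

/-- `G` is factor-critical: deleting any single vertex leaves a factorizable graph. -/
def FactorCritical (G : SimpleGraph V) : Prop :=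
  ∀ v : V, HasPMOn G {v}ᶜ

/-- A walk is `M`-alternating: its edges outside `M` are pairwise vertex-disjoint. -/
def MAlternating (M : Set (Sym2 V)) {G : SimpleGraph V} {u v : V} (p : G.Walk u v) : Prop :=
  ∀ e ∈ p.edges, ∀ f ∈ p.edges, e ∉ M → f ∉ M → e ≠ f → ∀ x : V, x ∈ e → x ∉ f

/-- An `M`-saturated path: a path with an odd number of edges such that `M ∩ E(P)`
is a perfect matching of `P`. -/
def IsSaturatedPath (M : Set (Sym2 V)) {G : SimpleGraph V} {u v : V} (p : G.Walk u v) : Prop :=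
  p.IsPath ∧ Odd p.length ∧ ∀ x ∈ p.support, ∃ e ∈ p.edges, e ∈ M ∧ x ∈ e

/-- An `M`-exposed path: a path with an odd number of edges such that `E(P) \ M`
is a perfect matching of `P`. -/
def IsExposedPath (M : Set (Sym2 V)) {G : SimpleGraph V} {u v : V} (p : G.Walk u v) : Prop :=
  p.IsPath ∧ Odd p.length ∧ ∀ x ∈ p.support, ∃ e ∈ p.edges, e ∉ M ∧ x ∈ e

/-- An `M`-balanced path from `u` to `v`: an `M`-alternating path with an even number
of edges whose first edge (the one incident with `u`) belongs to `M`; a trivial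
one-vertex path is `M`-balanced. -/
def IsBalancedPath (M : Set (Sym2 V)) {G : SimpleGraph V} {u v : V} (p : G.Walk u v) : Prop :=
  p.IsPath ∧ Even p.length ∧ MAlternating M p ∧ ∀ e ∈ p.edges.head?, e ∈ M

/-- An edge of `G` is allowed if it lies in some perfect matching of `G`. -/
def Allowed (G : SimpleGraph V) (e : Sym2 V) : Prop :=
  ∃ M : Set (Sym2 V), IsPerfectMatchingSet G M ∧ e ∈ M

/-- The spanning subgraph of `G` formed by its allowed edges. -/
def allowedSubgraph (G : SimpleGraph V) : SimpleGraph V where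
  Adj u v := G.Adj u v ∧ Allowed G s(u, v)
  symm := by
    constructor
    intro u v h
    refine ⟨h.1.symm, ?_⟩
    rw [Sym2.eq_swap]
    exact h.2
  loopless := ⟨fun v h => G.irrefl (v := v) h.1⟩

/-- `C` is (the vertex set of) a factor-component of `G`: a connected component of the
spanning subgraph of `G` formed by the allowed edges (the factor-component itself being
the induced subgraph `G[C]`). -/
def IsFactorComponent (G : SimpleGraph V) (C : Set V) : Prop :=
  ∃ c : (allowedSubgraph G).ConnectedComponent, C = c.supp

/-- `G` is elementary: it is factorizable and has exactly one factor-component. -/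
def Elementary (G : SimpleGraph V) : Prop :=
  Factorizable G ∧ (allowedSubgraph G).Connected

/-- `X` is a separating set of `G`. -/
def Separating (G : SimpleGraph V) (X : Set V) : Prop :=
  ∀ C : Set V, IsFactorComponent G C → C ⊆ X ∨ Disjoint C X

/-- The contraction `G[X]/S`: the induced subgraph of `G` on `X` with `S` contracted
to a single vertex (the vertex `none`), deleting loops and parallel edges. -/
def contractOn (G : SimpleGraph V) (X S : Set V) : SimpleGraph (Option ↥(X \ S)) where
  Adj a b :=
    match a, b with
    | some x, some y => G.Adj x.1 y.1
    | some x, none => ∃ s ∈ S, G.Adj x.1 s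
    | none, some y => ∃ s ∈ S, G.Adj y.1 s
    | none, none => False
  symm := by
    constructor
    rintro (_ | x) (_ | y) h
    · exact h.elim
    · exact h
    · exact h
    · exact h.symm
  loopless := by
    constructor
    rintro (_ | x) h
    · exact h.elim
    · exact G.irrefl (v := x.1) h

/-- `X` is a critical-inducing set for the factor-component (with vertex set) `C1`:
a separating set containing `C1` such that `G[X]/C1` is factor-critical. -/
def CriticalInducing (G : SimpleGraph V) (C1 X : Set V) : Prop :=
  Separating G X ∧ C1 ⊆ X ∧ FactorCritical (contractOn G X C1)

/-- `C1 ⊵ C2`: there is a critical-inducing set for `C1` to `C2`. -/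
def Yield (G : SimpleGraph V) (C1 C2 : Set V) : Prop :=
  ∃ X : Set V, CriticalInducing G C1 X ∧ C2 ⊆ X

/-- `u ∼ v`: `u = v` or `G - u - v` has no perfect matching. -/
def SimRel (G : SimpleGraph V) (u v : V) : Prop :=
  u = v ∨ ¬ HasPMOn G (({u, v} : Set V)ᶜ)

/-- An `M`-ear relative to the vertex set `X`: a path whose two end vertices lie in `X`
and whose internal vertices do not (or a cycle with exactly one vertex in `X`), such
that the ear minus `X` is an `M`-saturated path. -/
def IsMEar (G : SimpleGraph V) (M : Set (Sym2 V)) (X : Set V) {u v : V}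
    (p : G.Walk u v) : Prop :=
  u ∈ X ∧ v ∈ X ∧ ((∃ h : u = v, (p.copy rfl h.symm).IsCycle) ∨ (u ≠ v ∧ p.IsPath)) ∧
  ∃ (x y : V) (hux : G.Adj u x) (q : G.Walk x y) (hyv : G.Adj y v),
    p = SimpleGraph.Walk.cons hux (q.concat hyv) ∧
    IsSaturatedPath M q ∧ ∀ w ∈ q.support, w ∉ X

/-- An `M`-ear relative to `X` through (the factor-component with vertex set) `C`:
some internal vertex of the ear lies in `C`. -/
def IsMEarThrough (G : SimpleGraph V) (M : Set (Sym2 V)) (X C : Set V) {u v : V}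
    (p : G.Walk u v) : Prop :=
  IsMEar G M X p ∧ ∃ w ∈ p.support, w ∉ X ∧ w ∈ C

/-- An `M`-ear sequence `(H 0, …, H k)` of pairwise distinct factor-components,
where for each `i` there is an `M`-ear relative to `H i` through `H (i+1)`. -/
def IsMEarSequence (G : SimpleGraph V) (M : Set (Sym2 V)) (k : ℕ)
    (H : Fin (k + 1) → Set V) : Prop :=
  (∀ i, IsFactorComponent G (H i)) ∧ Function.Injective H ∧
  ∀ i : Fin k, ∃ (u v : V) (p : G.Walk u v),
    IsMEarThrough G M (H i.castSucc) (H i.succ) p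


/-!
Let `D` be the union of the factor-components met by the ear, whose interior is an
`M`-saturated path `q` from `x` to `y`. Factor-components lie entirely inside or outside `X`, so
`X ∪ D` is again separating. A vertex of `G[X ∪ D]/G₁` is removed by gluing matchings: for a
vertex of `G[X]/G₁`, a matching from factor-criticality of `G[X]/G₁` together with `M` on `D`;
for `w ∈ D`, a perfect matching of `G[D] - w - z` with `z ∈ {x, y}`, the ear edge joining `z`
to `X`, and a matching of `G[X]/G₁` missing the other end of that edge.

For `w` on `q` such a matching comes from shifting `M` along `q`. Any other `w ∈ D` is joined
to `q` inside its factor-component by an `M`-alternating path starting with an `M`-edge, and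
shifting along it carries the exposed vertex from `q` back to `w`. These paths are grown along
allowed edges: an allowed edge `a b` lies on an `M`-alternating cycle (from `M Δ M'` for a
perfect matching `M'` through it), and an alternating path reaching `a` is rerouted around
that cycle to `b`.
-/

def coveredVerts (N : Set (Sym2 V)) : Set V := {v | ∃ e ∈ N, v ∈ e}

def IsMatchingOn (G : SimpleGraph V) (N : Set (Sym2 V)) (S : Set V) : Prop :=
  IsMatchingSet G N ∧ coveredVerts N = S

def IsClosedUnder (M : Set (Sym2 V)) (S : Set V) : Prop :=
  ∀ ⦃a b : V⦄, s(a, b) ∈ M → a ∈ S → b ∈ S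

section Matchings

variable {W : Type*} {G : SimpleGraph V} {N N' : Set (Sym2 V)} {S T : Set V}

lemma DisjointEdges.eq_of_mem {e f : Sym2 V} (hN : DisjointEdges N) (he : e ∈ N) (hf : f ∈ N)
    {x : V} (hxe : x ∈ e) (hxf : x ∈ f) : e = f :=
  by_contra fun hne => hN e he f hf hne x hxe hxf

lemma DisjointEdges.mono (hN : DisjointEdges N) (h : N' ⊆ N) : DisjointEdges N' :=
  fun e he f hf => hN e (h he) f (h hf)

lemma IsMatchingOn.mem_of_mem (hN : IsMatchingOn G N S) {e : Sym2 V} (he : e ∈ N) {v : V}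
    (hv : v ∈ e) : v ∈ S :=
  hN.2 ▸ ⟨e, he, hv⟩

lemma hasPMOn_iff : HasPMOn G S ↔ ∃ N, IsMatchingOn G N S := by
  refine exists_congr fun N => and_congr_right fun _ => ?_
  simp only [Set.ext_iff, coveredVerts, Set.mem_ofPred_eq]
  exact ⟨fun h v => ⟨fun ⟨e, he, hv⟩ => h.1 e he v hv, h.2 v⟩,
    fun h => ⟨fun e he v hv => (h v).1 ⟨e, he, hv⟩, fun v => (h v).2⟩⟩

lemma IsMatchingOn.union (hN : IsMatchingOn G N S) (hN' : IsMatchingOn G N' T)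
    (hST : Disjoint S T) : IsMatchingOn G (N ∪ N') (S ∪ T) := by
  refine ⟨⟨Set.union_subset hN.1.1 hN'.1.1, ?_⟩, ?_⟩
  · have hcross : ∀ e ∈ N, ∀ f ∈ N', ∀ x, x ∈ e → x ∉ f := fun e he f hf x hxe hxf =>
      hST.notMem_of_mem_left (hN.mem_of_mem he hxe) (hN'.mem_of_mem hf hxf)
    rintro e (he | he) f (hf | hf) hne x hxe hxf
    exacts [hN.1.2 e he f hf hne x hxe hxf, hcross e he f hf x hxe hxf,
      hcross f hf e he x hxf hxe, hN'.1.2 e he f hf hne x hxe hxf]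
  · rw [← hN.2, ← hN'.2]
    ext v
    simp only [coveredVerts, Set.mem_union, Set.mem_ofPred_eq]
    constructor
    · rintro ⟨e, he | he, hv⟩
      exacts [Or.inl ⟨e, he, hv⟩, Or.inr ⟨e, he, hv⟩]
    · rintro (⟨e, he, hv⟩ | ⟨e, he, hv⟩)
      exacts [⟨e, Or.inl he, hv⟩, ⟨e, Or.inr he, hv⟩]

lemma isMatchingOn_edge {a b : V} (h : G.Adj a b) : IsMatchingOn G {s(a, b)} {a, b} := by
  refine ⟨⟨by simpa using h, fun e he f hf hne => absurd (he.trans hf.symm) hne⟩, ?_⟩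
  ext v
  simp [coveredVerts]

lemma IsMatchingOn.sdiff_edge (hN : IsMatchingOn G N S) {a b : V} (hab : s(a, b) ∈ N) :
    IsMatchingOn G (N \ {s(a, b)}) (S \ {a, b}) := by
  refine ⟨⟨Set.sdiff_subset.trans hN.1.1, hN.1.2.mono Set.sdiff_subset⟩, ?_⟩
  rw [← hN.2]
  ext v
  simp only [coveredVerts, Set.mem_sdiff, Set.mem_singleton_iff, Set.mem_ofPred_eq,
    Set.mem_insert_iff, not_or]
  constructor
  · rintro ⟨e, ⟨he, hne⟩, hv⟩
    refine ⟨⟨e, he, hv⟩, fun hva => hne ?_, fun hvb => hne ?_⟩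
    · exact hN.1.2.eq_of_mem he hab hv (hva ▸ Sym2.mem_mk_left a b)
    · exact hN.1.2.eq_of_mem he hab hv (hvb ▸ Sym2.mem_mk_right a b)
  · rintro ⟨⟨e, he, hv⟩, hva, hvb⟩
    refine ⟨e, ⟨he, ?_⟩, hv⟩
    rintro rfl
    rcases Sym2.mem_iff.mp hv with rfl | rfl <;> contradiction

lemma IsMatchingOn.exchange (hN : IsMatchingOn G N S) {w w₁ w₂ : V} (he : s(w, w₁) ∈ N)
    (h : G.Adj w₁ w₂) (hw₂ : w₂ ∉ S) :
    IsMatchingOn G (insert s(w₁, w₂) (N \ {s(w, w₁)})) (insert w₂ (S \ {w})) := by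
  have hw₁ : w₁ ∈ S := hN.mem_of_mem he (Sym2.mem_mk_right w w₁)
  have hww₁ : w ≠ w₁ := (G.mem_edgeSet.mp (hN.1.1 he)).ne
  have hrest := (hN.sdiff_edge he).union (isMatchingOn_edge h) (by
    rw [Set.disjoint_left]
    rintro v ⟨hvS, hv⟩ (rfl | rfl)
    exacts [hv (Or.inr rfl), hw₂ hvS])
  rw [Set.union_comm, Set.singleton_union] at hrest
  convert hrest using 1
  ext v
  simp only [Set.mem_insert_iff, Set.mem_sdiff, Set.mem_singleton_iff, Set.mem_union]
  by_cases hv₁ : v = w₁ <;> by_cases hv₂ : v = w₂ <;> simp_all [eq_comm]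

lemma IsMatchingOn.image {H : SimpleGraph W} {f : V → W} (hN : IsMatchingOn G N S)
    (hf : Set.InjOn f S) (hadj : ∀ a ∈ S, ∀ b ∈ S, G.Adj a b → H.Adj (f a) (f b)) :
    IsMatchingOn H (Sym2.map f '' N) (f '' S) := by
  have hS : ∀ e ∈ N, ∀ v ∈ e, v ∈ S := fun e he v hv => hN.mem_of_mem he hv
  refine ⟨⟨?_, ?_⟩, ?_⟩
  · rintro _ ⟨e, he, rfl⟩
    induction e using Sym2.ind with
    | _ a b =>
      exact hadj a (hS _ he a (Sym2.mem_mk_left a b)) b (hS _ he b (Sym2.mem_mk_right a b))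
        (hN.1.1 he)
  · rintro _ ⟨e, he, rfl⟩ _ ⟨f, hf', rfl⟩ hne x hxe hxf
    obtain ⟨a, ha, rfl⟩ := Sym2.mem_map.mp hxe
    obtain ⟨b, hb, hab⟩ := Sym2.mem_map.mp hxf
    rw [hf (hS f hf' b hb) (hS e he a ha) hab] at hb
    exact hne (congrArg _ (hN.1.2.eq_of_mem he hf' ha hb))
  · rw [← hN.2]
    ext x
    simp only [coveredVerts, Set.mem_image, Set.mem_ofPred_eq, exists_exists_and_eq_and,
      Sym2.mem_map]
    constructor
    · rintro ⟨e, he, a, ha, rfl⟩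
      exact ⟨a, ⟨e, he, ha⟩, rfl⟩
    · rintro ⟨a, ⟨e, he, ha⟩, rfl⟩
      exact ⟨e, he, a, ha, rfl⟩

lemma IsPerfectMatchingSet.isMatchingOn_inter_sym2 {M : Set (Sym2 V)}
    (hM : IsPerfectMatchingSet G M) (hS : IsClosedUnder M S) :
    IsMatchingOn G (M ∩ S.sym2) S := by
  refine ⟨⟨Set.inter_subset_left.trans hM.1.1, hM.1.2.mono Set.inter_subset_left⟩, ?_⟩
  ext v
  refine ⟨fun ⟨e, he, hv⟩ => Set.mem_sym2_iff_subset.mp he.2 hv, fun hv => ?_⟩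
  obtain ⟨e, he, hve⟩ := hM.2 v
  obtain ⟨w, rfl⟩ := Sym2.mem_iff_exists.mp hve
  exact ⟨_, ⟨he, Set.mk_mem_sym2_iff.mpr ⟨hv, hS he hv⟩⟩, hve⟩

end Matchings

section Gluing

variable {W : Type*} {K : SimpleGraph W} {A B : Set W}

lemma exists_isMatchingOn_union_sdiff_singleton (hAB : Disjoint A B)
    (hA : ∀ a ∈ A, ∃ N, IsMatchingOn K N (A \ {a})) (hB : ∃ N, IsMatchingOn K N B)
    (hear : ∀ b ∈ B, ∃ z ∈ B, z ≠ b ∧ (∃ a ∈ A, K.Adj a z) ∧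
      ∃ N, IsMatchingOn K N (B \ {b, z})) :
    ∀ c ∈ A ∪ B, ∃ N, IsMatchingOn K N ((A ∪ B) \ {c}) := by
  rintro c (hc | hc)
  · obtain ⟨NA, hNA⟩ := hA c hc
    obtain ⟨NB, hNB⟩ := hB
    refine ⟨NA ∪ NB, ?_⟩
    convert hNA.union hNB (hAB.mono_left Set.sdiff_subset) using 1
    rw [Set.union_sdiff_distrib, Set.sdiff_singleton_eq_self (hAB.notMem_of_mem_left hc)]
  · obtain ⟨z, hz, hzc, ⟨a, ha, haz⟩, NB, hNB⟩ := hear c hc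
    obtain ⟨NA, hNA⟩ := hA a ha
    have hza : z ∉ A := hAB.notMem_of_mem_right hz
    have hcA : c ∉ A := hAB.notMem_of_mem_right hc
    refine ⟨(NA ∪ {s(a, z)}) ∪ NB, ?_⟩
    convert (hNA.union (isMatchingOn_edge haz) ?_).union hNB ?_ using 1
    · ext v
      by_cases hva : v = a <;> by_cases hvz : v = z <;> by_cases hvc : v = c <;>
        simp_all
    · simp [hza]
    · rw [Set.disjoint_left]
      rintro v (⟨hvA, -⟩ | rfl | rfl) ⟨hvB, hv⟩
      · exact hAB.notMem_of_mem_left hvA hvB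
      · exact hAB.notMem_of_mem_left ha hvB
      · exact hv (Or.inr rfl)

end Gluing

namespace SimpleGraph.Walk

variable {G : SimpleGraph V} {M : Set (Sym2 V)}

def MCovers (M : Set (Sym2 V)) {u v : V} (W : G.Walk u v) (x : V) : Prop :=
  ∃ e ∈ W.edges, e ∈ M ∧ x ∈ e

/-- Encodes an `M`-alternating path starting with an `M`-edge (an `M`-saturated or `M`-balanced
path): its `M`-edges cover every vertex except possibly the last. -/
def IsMAltPath (M : Set (Sym2 V)) {u v : V} (W : G.Walk u v) : Prop :=
  W.IsPath ∧ ∀ x ∈ W.support, x ≠ v → W.MCovers M x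

lemma MCovers.mem_support {u v x : V} {W : G.Walk u v} (h : W.MCovers M x) : x ∈ W.support :=
  let ⟨_, he, _, hx⟩ := h
  mem_support_of_mem_edges he hx

lemma MCovers.mono {u v u' v' x : V} {W : G.Walk u v} {W' : G.Walk u' v'}
    (hW : W.edges ⊆ W'.edges) (h : W.MCovers M x) : W'.MCovers M x :=
  let ⟨e, he, heM, hx⟩ := h
  ⟨e, hW he, heM, hx⟩

lemma mCovers_append_iff {u v w x : V} {P : G.Walk u v} {R : G.Walk v w} :
    (P.append R).MCovers M x ↔ P.MCovers M x ∨ R.MCovers M x := by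
  simp only [MCovers, edges_append, List.mem_append, or_and_right, exists_or]

lemma IsPath.eq_of_mem_support_append {u v w x : V} {P : G.Walk u v} {R : G.Walk v w}
    (h : (P.append R).IsPath) (hP : x ∈ P.support) (hR : x ∈ R.support) : x = v :=
  by_contra fun hx => h.ne_of_mem_support_of_append hx hP hR rfl

lemma IsPath.mCovers_append_left {u v w x : V} {P : G.Walk u v} {R : G.Walk v w}
    (h : (P.append R).IsPath) (hP : x ∈ P.support) (hx : x ≠ v)
    (hcov : (P.append R).MCovers M x) : P.MCovers M x :=
  (mCovers_append_iff.mp hcov).resolve_right fun hR =>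
    hx (h.eq_of_mem_support_append hP hR.mem_support)

lemma IsPath.mCovers_append_right {u v w x : V} {P : G.Walk u v} {R : G.Walk v w}
    (h : (P.append R).IsPath) (hR : x ∈ R.support) (hx : x ≠ v)
    (hcov : (P.append R).MCovers M x) : R.MCovers M x :=
  (mCovers_append_iff.mp hcov).resolve_left fun hP =>
    hx (h.eq_of_mem_support_append hP.mem_support hR)

lemma IsPath.eq_cons_of_mCovers_start {u v : V} {W : G.Walk u v} (hW : W.IsPath)
    (hu : W.MCovers M u) :
    ∃ (w₁ : V) (h : G.Adj u w₁) (W' : G.Walk w₁ v), W = cons h W' ∧ s(u, w₁) ∈ M := by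
  obtain ⟨e, he, heM, hue⟩ := hu
  cases W with
  | nil => simp at he
  | cons h W' =>
    refine ⟨_, h, W', rfl, ?_⟩
    rcases List.mem_cons.mp he with rfl | he
    · exact heM
    · exact absurd (mem_support_of_mem_edges he hue) ((cons_isPath_iff _ _).mp hW).2

lemma IsPath.mCovers_of_cons_cons (hM : DisjointEdges M) {u w₁ w₂ v x : V} {h₁ : G.Adj u w₁}
    {h₂ : G.Adj w₁ w₂} {W : G.Walk w₂ v} (hW : (cons h₁ (cons h₂ W)).IsPath)
    (hu : s(u, w₁) ∈ M) (hx : x ∈ W.support) (hcov : (cons h₁ (cons h₂ W)).MCovers M x) :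
    W.MCovers M x := by
  have hW' := (cons_isPath_iff _ _).mp hW
  have hu₁ : u ∉ W.support := fun h => hW'.2 (List.mem_cons_of_mem _ h)
  have hw₁ : w₁ ∉ W.support := ((cons_isPath_iff _ _).mp hW'.1).2
  obtain ⟨e, he, heM, hxe⟩ := hcov
  simp only [edges_cons, List.mem_cons] at he
  rcases he with rfl | rfl | he
  · rcases Sym2.mem_iff.mp hxe with rfl | rfl <;> contradiction
  · have := hM.eq_of_mem heM hu (Sym2.mem_mk_left w₁ w₂) (Sym2.mem_mk_right u w₁)
    rcases Sym2.eq_iff.mp this with ⟨rfl, -⟩ | ⟨-, rfl⟩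
    · exact absurd rfl h₁.ne
    · exact absurd (start_mem_support W) hu₁
  · exact ⟨e, he, heM, hxe⟩

lemma IsMAltPath.cons_cons {u w₁ w₂ v : V} (h₁ : G.Adj u w₁) (h₂ : G.Adj w₁ w₂)
    {W : G.Walk w₂ v} (hW : W.IsMAltPath M) (hu : s(u, w₁) ∈ M) (hu₁ : u ∉ W.support)
    (hw₁ : w₁ ∉ W.support) : (cons h₁ (cons h₂ W)).IsMAltPath M := by
  refine ⟨(hW.1.cons hw₁).cons ?_, fun x hx hxv => ?_⟩
  · simp only [support_cons, List.mem_cons, not_or]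
    exact ⟨h₁.ne, hu₁⟩
  · simp only [support_cons, List.mem_cons] at hx
    rcases hx with rfl | rfl | hx
    · exact ⟨_, List.mem_cons_self, hu, Sym2.mem_mk_left _ _⟩
    · exact ⟨_, List.mem_cons_self, hu, Sym2.mem_mk_right _ _⟩
    · exact (hW.2 x hx hxv).mono fun e he => List.mem_cons_of_mem _ (List.mem_cons_of_mem _ he)

lemma IsMAltPath.eq_cons_cons (hM : DisjointEdges M) {Q : Set V} (hQ : IsClosedUnder M Q)
    {w t : V} {W : G.Walk w t} (hW : W.IsMAltPath M) (ht : t ∈ Q) (hw : w ∉ Q) :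
    ∃ (w₁ w₂ : V) (h₁ : G.Adj w w₁) (h₂ : G.Adj w₁ w₂) (W' : G.Walk w₂ t),
      W = cons h₁ (cons h₂ W') ∧ s(w, w₁) ∈ M ∧ w₁ ∉ Q ∧ W'.IsMAltPath M := by
  have hwt : w ≠ t := fun h => hw (h ▸ ht)
  obtain ⟨w₁, h₁, W₁, rfl, hw₁⟩ :=
    hW.1.eq_cons_of_mCovers_start (hW.2 w (start_mem_support W) hwt)
  have hw₁Q : w₁ ∉ Q := fun h => hw (hQ (Sym2.eq_swap ▸ hw₁) h)
  cases W₁ with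
  | nil => exact absurd ht hw₁Q
  | cons h₂ W' =>
    refine ⟨w₁, _, h₁, h₂, W', rfl, hw₁, hw₁Q, ?_, fun x hx hxt => ?_⟩
    · exact ((cons_isPath_iff _ _).mp ((cons_isPath_iff _ _).mp hW.1).1).1
    · exact hW.1.mCovers_of_cons_cons hM hw₁ hx
        (hW.2 x (List.mem_cons_of_mem _ (List.mem_cons_of_mem _ hx)) hxt)

lemma isClosedUnder_support (hM : DisjointEdges M) {u v : V} {W : G.Walk u v}
    (hW : ∀ x ∈ W.support, W.MCovers M x) : IsClosedUnder M {x | x ∈ W.support} := by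
  intro a b hab ha
  obtain ⟨e, he, heM, hae⟩ := hW a ha
  rw [hM.eq_of_mem heM hab hae (Sym2.mem_mk_left a b)] at he
  exact snd_mem_support_of_mem_edges W he

end SimpleGraph.Walk

lemma symmDiff_insert_sdiff_singleton_subset {α : Type*} {A B : Set α} {e f : α} (he : e ∈ B)
    (hf : f ∉ B) : symmDiff B (insert e (A \ {f})) ⊆ symmDiff B A := by
  intro g
  simp only [Set.mem_symmDiff, Set.mem_insert_iff, Set.mem_sdiff, Set.mem_singleton_iff]
  rintro (⟨hgB, hgA⟩ | ⟨rfl | ⟨hgA, -⟩, hgB⟩)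
  · exact Or.inl ⟨hgB, fun hgA' => hgA (Or.inr ⟨hgA', fun h => hf (h ▸ hgB)⟩)⟩
  · exact absurd he hgB
  · exact Or.inr ⟨hgA, hgB⟩

lemma ncard_insert_sdiff_singleton_sdiff_lt {α : Type*} [Finite α] {A B : Set α} {e f : α}
    (he : e ∈ B) (hf : f ∈ A \ B) : (insert e (A \ {f}) \ B).ncard < (A \ B).ncard := by
  have : insert e (A \ {f}) \ B = (A \ B) \ {f} := by
    ext g
    by_cases hg : g = e <;> simp_all
    tauto
  exact this ▸ Set.ncard_sdiff_singleton_lt_of_mem hf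

open SimpleGraph.Walk in
lemma cons_cons_saturated_symmDiff {G : SimpleGraph V} {A B : Set (Sym2 V)}
    (hB : DisjointEdges B) {a a₁ a₂ b : V} (h₁ : G.Adj a a₁) (h₂ : G.Adj a₁ a₂)
    (heB : s(a, a₁) ∈ B) (heA : s(a, a₁) ∉ A) (hfA : s(a₁, a₂) ∈ A) (hfB : s(a₁, a₂) ∉ B)
    {P : G.Walk a₂ b} (hP : P.IsPath) (hPcov : ∀ x ∈ P.support, P.MCovers B x)
    (hPedges : ∀ e ∈ P.edges, e ∈ symmDiff B (insert s(a, a₁) (A \ {s(a₁, a₂)}))) :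
    (cons h₁ (cons h₂ P)).IsPath ∧ (∀ x ∈ (cons h₁ (cons h₂ P)).support,
      (cons h₁ (cons h₂ P)).MCovers B x) ∧ ∀ e ∈ (cons h₁ (cons h₂ P)).edges, e ∈ symmDiff B A := by
  have hnot : ∀ x ∈ s(a, a₁), x ∉ P.support := fun x hx hxP => by
    obtain ⟨g, hg, hgB, hxg⟩ := hPcov x hxP
    rw [hB.eq_of_mem hgB heB hxg hx] at hg
    exact (Set.mem_symmDiff.mp (hPedges _ hg)).elim (fun h => h.2 (Set.mem_insert _ _))
      fun h => h.2 heB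
  have hP' := IsMAltPath.cons_cons h₁ h₂ ⟨hP, fun x hx _ => hPcov x hx⟩ heB
    (hnot a (Sym2.mem_mk_left a a₁)) (hnot a₁ (Sym2.mem_mk_right a a₁))
  refine ⟨hP'.1, fun x hx => ?_, fun g hg => ?_⟩
  · by_cases hxb : x = b
    · rw [hxb]
      exact (hPcov b (end_mem_support P)).mono fun e he => by simp [he]
    · exact hP'.2 x hx hxb
  · simp only [edges_cons, List.mem_cons] at hg
    rcases hg with rfl | rfl | hg
    exacts [Or.inl ⟨heB, heA⟩, Or.inr ⟨hfA, hfB⟩,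
      symmDiff_insert_sdiff_singleton_subset heB hfB (hPedges g hg)]

open SimpleGraph.Walk in
/-- Following `B`- and `A`-edges alternately from `a` must end in `b`, the only other vertex
of `S` that `A` leaves exposed. -/
lemma exists_saturated_path_symmDiff [Finite V] {G : SimpleGraph V} {A B : Set (Sym2 V)}
    {S : Set V} (hB : IsMatchingOn G B S) {a b : V} (hA : IsMatchingOn G A (S \ {a, b}))
    (ha : a ∈ S) (hb : b ∈ S) (hab : a ≠ b) :
    ∃ P : G.Walk a b, P.IsPath ∧ (∀ x ∈ P.support, P.MCovers B x) ∧
      ∀ e ∈ P.edges, e ∈ symmDiff B A := by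
  induction hn : (A \ B).ncard using Nat.strong_induction_on generalizing A a with
  | _ n ih =>
  obtain ⟨e, heB, hae⟩ : a ∈ coveredVerts B := hB.2 ▸ ha
  obtain ⟨a₁, rfl⟩ := Sym2.mem_iff_exists.mp hae
  have h₁ : G.Adj a a₁ := hB.1.1 heB
  have heA : s(a, a₁) ∉ A := fun h => (hA.mem_of_mem h (Sym2.mem_mk_left a a₁)).2 (Or.inl rfl)
  by_cases ha₁b : a₁ = b
  · subst ha₁b
    refine ⟨cons h₁ nil, by simp [hab], fun x hx => ⟨s(a, a₁), by simp, heB, ?_⟩,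
      by simp [Set.mem_symmDiff, heB, heA]⟩
    rcases (by simpa using hx : x = a ∨ x = a₁) with rfl | rfl <;> simp
  obtain ⟨f, hfA, ha₁f⟩ : a₁ ∈ coveredVerts A :=
    hA.2 ▸ ⟨hB.mem_of_mem heB (Sym2.mem_mk_right a a₁), by simp [h₁.ne.symm, ha₁b]⟩
  obtain ⟨a₂, rfl⟩ := Sym2.mem_iff_exists.mp ha₁f
  have ha₂ := hA.mem_of_mem hfA (Sym2.mem_mk_right a₁ a₂)
  have hfB : s(a₁, a₂) ∉ B := fun h => by
    rcases Sym2.eq_iff.mp (hB.1.2.eq_of_mem heB h (Sym2.mem_mk_right a a₁)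
      (Sym2.mem_mk_left a₁ a₂)) with ⟨rfl, -⟩ | ⟨rfl, -⟩
    exacts [h₁.ne rfl, ha₂.2 (Or.inl rfl)]
  have hA' : IsMatchingOn G (insert s(a, a₁) (A \ {s(a₁, a₂)})) (S \ {a₂, b}) := by
    have := hA.exchange (Sym2.eq_swap ▸ hfA) h₁.symm (fun h => h.2 (Or.inl rfl))
    rw [(Sym2.eq_swap : s(a₁, a) = s(a, a₁)), (Sym2.eq_swap : s(a₂, a₁) = s(a₁, a₂))] at this
    convert this using 1
    ext x
    by_cases hxa : x = a <;> simp_all [eq_comm]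
    tauto
  obtain ⟨P, hP, hPcov, hPedges⟩ := ih _ (hn ▸ ncard_insert_sdiff_singleton_sdiff_lt heB ⟨hfA, hfB⟩)
    hA' ha₂.1 (fun h => ha₂.2 (Or.inr h)) rfl
  exact ⟨_, cons_cons_saturated_symmDiff hB.1.2 h₁ (hA.1.1 hfA) heB heA hfA hfB hP hPcov hPedges⟩

section FactorComponents

open SimpleGraph.Walk

variable {G : SimpleGraph V} {M : Set (Sym2 V)}

lemma IsPerfectMatchingSet.allowedSubgraph_adj (hM : IsPerfectMatchingSet G M) {a b : V}
    (hab : s(a, b) ∈ M) : (allowedSubgraph G).Adj a b :=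
  ⟨hM.1.1 hab, M, hM, hab⟩

lemma IsPerfectMatchingSet.isClosedUnder_supp (hM : IsPerfectMatchingSet G M)
    (c : (allowedSubgraph G).ConnectedComponent) : IsClosedUnder M c.supp := by
  intro a b hab ha
  rw [ConnectedComponent.mem_supp_iff] at ha ⊢
  rw [← ha]
  exact ConnectedComponent.sound (hM.allowedSubgraph_adj hab).symm.reachable

lemma IsPerfectMatchingSet.isClosedUnder_sUnion (hM : IsPerfectMatchingSet G M)
    {𝒞 : Set (Set V)} (h𝒞 : ∀ C ∈ 𝒞, IsFactorComponent G C) : IsClosedUnder M (⋃₀ 𝒞) := by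
  rintro a b hab ⟨C, hC, haC⟩
  obtain ⟨c, rfl⟩ := h𝒞 C hC
  exact ⟨_, hC, hM.isClosedUnder_supp c hab haC⟩

/-- The path is the component through `m z` of the symmetric difference of `M` with a perfect
matching containing `m z`, minus that edge. -/
lemma IsPerfectMatchingSet.exists_saturated_path [Finite V] (hM : IsPerfectMatchingSet G M)
    {m z : V} (hmz : (allowedSubgraph G).Adj m z) :
    ∃ P : G.Walk m z, P.IsPath ∧ (∀ x ∈ P.support, P.MCovers M x) ∧
      ∀ x ∈ P.support, x ∈ ((allowedSubgraph G).connectedComponentMk m).supp := by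
  obtain ⟨M₀, hM₀, hmzM₀⟩ := hmz.2
  set c := (allowedSubgraph G).connectedComponentMk m
  have hmS : m ∈ c.supp := rfl
  have hzS : z ∈ c.supp := (ConnectedComponent.sound hmz.reachable).symm
  have hB := hM.isMatchingOn_inter_sym2 (hM.isClosedUnder_supp c)
  have hA := (hM₀.isMatchingOn_inter_sym2 (hM₀.isClosedUnder_supp c)).sdiff_edge
    (a := m) (b := z) ⟨hmzM₀, hmS, hzS⟩
  obtain ⟨P, hP, hPcov, -⟩ := exists_saturated_path_symmDiff hB hA hmS hzS hmz.1.ne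
  refine ⟨P, hP, fun x hx => ?_, fun x hx => ?_⟩
  · obtain ⟨e, he, heM, hxe⟩ := hPcov x hx
    exact ⟨e, he, heM.1, hxe⟩
  · obtain ⟨e, -, heM, hxe⟩ := hPcov x hx
    exact hB.mem_of_mem heM hxe

/-- Go around the alternating cycle formed by `P` and the edge `z m`, leaving `s` along its
`M`-edge. -/
lemma exists_isMAltPath_of_mem_support {m z s : V} {P : G.Walk m z} (hP : P.IsPath)
    (hPcov : ∀ x ∈ P.support, P.MCovers M x) (hmz : G.Adj m z) (hs : s ∈ P.support)
    (hsz : s ≠ z) : ∃ R : G.Walk s z, R.IsMAltPath M ∧ ∀ x ∈ R.support, x ∈ P.support := by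
  obtain ⟨P₁, P₂, hP₁, hP₂, rfl⟩ := hP.mem_support_iff_exists_append.mp hs
  have hmem : ∀ x, x ∈ (P₁.append P₂).support ↔ x ∈ P₁.support ∨ x ∈ P₂.support :=
    fun x => mem_support_append_iff _ _
  rcases mCovers_append_iff.mp (hPcov s hs) with hs₁ | hs₂
  · have hz₁ : z ∉ P₁.support := fun h =>
      hsz (hP.eq_of_mem_support_append h (end_mem_support P₂)).symm
    have hedges : P₁.edges ⊆ (P₁.reverse.concat hmz).edges := fun e he => by
      simp [edges_concat, edges_reverse, he]
    refine ⟨P₁.reverse.concat hmz,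
      ⟨hP₁.reverse.concat (by simpa using hz₁) hmz, fun x hx hxz => ?_⟩, fun x hx => ?_⟩
    · have hx₁ : x ∈ P₁.support := by simpa [support_concat, hxz] using hx
      by_cases hxs : x = s
      · rw [hxs]
        exact hs₁.mono hedges
      · exact (hP.mCovers_append_left hx₁ hxs (hPcov x ((hmem x).2 (Or.inl hx₁)))).mono hedges
    · rcases (by simpa [support_concat] using hx : x ∈ P₁.support ∨ x = z) with hx | rfl
      · exact (hmem x).2 (Or.inl hx)
      · exact end_mem_support _
  · refine ⟨P₂, ⟨hP₂, fun x hx hxz => ?_⟩, fun x hx => (hmem x).2 (Or.inr hx)⟩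
    by_cases hxs : x = s
    · rw [hxs]
      exact hs₂
    · exact hP.mCovers_append_right hx hxs (hPcov x ((hmem x).2 (Or.inr hx)))

/-- Follow `W` until it first meets the cycle formed by `P` and the edge `z m`, then go around
that cycle to `z`. -/
lemma SimpleGraph.Walk.IsMAltPath.exists_splice (hM : DisjointEdges M) {m z : V}
    {P : G.Walk m z} (hP : P.IsPath) (hPcov : ∀ x ∈ P.support, P.MCovers M x) (hmz : G.Adj m z)
    {w : V} {W : G.Walk w m} (hW : W.IsMAltPath M) (hzW : z ∉ W.support) :
    ∃ R : G.Walk w z, R.IsMAltPath M ∧ ∀ x ∈ R.support, x ∈ W.support ∨ x ∈ P.support := by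
  induction hn : W.length using Nat.strong_induction_on generalizing w with
  | _ n ih =>
  by_cases hwP : w ∈ P.support
  · obtain ⟨R, hR, hRP⟩ := exists_isMAltPath_of_mem_support hP hPcov hmz hwP
      (fun h => hzW (h ▸ start_mem_support W))
    exact ⟨R, hR, fun x hx => Or.inr (hRP x hx)⟩
  obtain ⟨w₁, w₂, h₁, h₂, W', rfl, hw₁M, hw₁P, hW'⟩ :=
    hW.eq_cons_cons hM (isClosedUnder_support hM hPcov) (start_mem_support P) hwP
  have hsupp : ∀ x ∈ W'.support, x ∈ (cons h₁ (cons h₂ W')).support := fun x hx =>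
    List.mem_cons_of_mem _ (List.mem_cons_of_mem _ hx)
  obtain ⟨R', hR', hR'supp⟩ := ih W'.length (by simp [← hn]) hW'
    (fun h => hzW (hsupp z h)) rfl
  have hpath := (cons_isPath_iff _ _).mp hW.1
  have hW'w : w ∉ W'.support := fun h => hpath.2 (List.mem_cons_of_mem _ h)
  have hW'w₁ : w₁ ∉ W'.support := ((cons_isPath_iff _ _).mp hpath.1).2
  refine ⟨cons h₁ (cons h₂ R'), hR'.cons_cons h₁ h₂ hw₁M ?_ ?_, fun x hx => ?_⟩
  · exact fun h => (hR'supp w h).elim hW'w hwP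
  · exact fun h => (hR'supp w₁ h).elim hW'w₁ hw₁P
  · simp only [support_cons, List.mem_cons] at hx
    rcases hx with rfl | rfl | hx
    · exact Or.inl (start_mem_support _)
    · exact Or.inl (List.mem_cons_of_mem _ (start_mem_support _))
    · exact (hR'supp x hx).imp_left (hsupp x)

lemma SimpleGraph.Walk.IsMAltPath.exists_extend [Finite V] (hM : IsPerfectMatchingSet G M)
    {c : (allowedSubgraph G).ConnectedComponent} {w m z : V} {W : G.Walk w m}
    (hW : W.IsMAltPath M) (hWc : ∀ x ∈ W.support, x ∈ c.supp)
    (hmz : (allowedSubgraph G).Adj m z) :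
    ∃ R : G.Walk w z, R.IsMAltPath M ∧ ∀ x ∈ R.support, x ∈ c.supp := by
  by_cases hzW : z ∈ W.support
  · obtain ⟨R, R', hR, -, rfl⟩ := hW.1.mem_support_iff_exists_append.mp hzW
    refine ⟨R, ⟨hR, fun x hx hxz => hW.1.mCovers_append_left hx hxz (hW.2 x ?_ ?_)⟩,
      fun x hx => hWc x ((mem_support_append_iff _ _).2 (Or.inl hx))⟩
    · exact (mem_support_append_iff _ _).2 (Or.inl hx)
    · rintro rfl
      exact hxz (hW.1.eq_of_mem_support_append hx (end_mem_support R'))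
  · obtain ⟨P, hP, hPcov, hPc⟩ := hM.exists_saturated_path hmz
    obtain ⟨R, hR, hRsupp⟩ := hW.exists_splice hM.1.2 hP hPcov hmz.1 hzW
    have hc : (allowedSubgraph G).connectedComponentMk m = c := hWc m (end_mem_support W)
    exact ⟨R, hR, fun x hx => (hRsupp x hx).elim (hWc x) fun h => hc ▸ hPc x h⟩

lemma IsPerfectMatchingSet.exists_isMAltPath [Finite V] (hM : IsPerfectMatchingSet G M)
    {c : (allowedSubgraph G).ConnectedComponent} {w w' : V} (hw : w ∈ c.supp)
    (hw' : w' ∈ c.supp) :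
    ∃ W : G.Walk w w', W.IsMAltPath M ∧ ∀ x ∈ W.support, x ∈ c.supp := by
  obtain ⟨Wa⟩ := ConnectedComponent.exact (hw'.trans hw.symm)
  clear hw
  induction Wa with
  | nil => exact ⟨nil, ⟨IsPath.nil, by simp⟩, by simpa using hw'⟩
  | @cons a m _ h Wa ih =>
    have hm : m ∈ c.supp := (ConnectedComponent.sound h.reachable).symm.trans hw'
    obtain ⟨W, hW, hWc⟩ := ih hm
    exact hW.exists_extend hM hWc h.symm

end FactorComponents

section Ear

open SimpleGraph.Walk

variable {G : SimpleGraph V} {M : Set (Sym2 V)} {D T : Set V}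

/-- The clause `M ∩ (D \ T).sym2 ⊆ N` keeps the `M`-edges away from the vertices `T` already
used, so that later shifts can trade them. -/
def ExposablePair (G : SimpleGraph V) (M : Set (Sym2 V)) (D T : Set V) (w z : V) : Prop :=
  w ≠ z ∧ ∃ N, IsMatchingOn G N (D \ {w, z}) ∧ M ∩ (D \ T).sym2 ⊆ N

lemma ExposablePair.symm {w z : V} (h : ExposablePair G M D T w z) :
    ExposablePair G M D T z w := by
  rw [ExposablePair, Set.pair_comm]
  exact ⟨h.1.symm, h.2⟩

lemma ExposablePair.mono {T' : Set V} {w z : V} (h : ExposablePair G M D T w z) (hT : T ⊆ T') :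
    ExposablePair G M D T' w z := by
  obtain ⟨hwz, N, hN, hMN⟩ := h
  refine ⟨hwz, N, hN, fun e he => hMN ⟨he.1, ?_⟩⟩
  exact Set.mem_sym2_iff_subset.mpr
    ((Set.mem_sym2_iff_subset.mp he.2).trans (Set.sdiff_subset_sdiff_right hT))

lemma exposablePair_of_mem (hM : IsPerfectMatchingSet G M) (hD : IsClosedUnder M D) {a b : V}
    (hab : s(a, b) ∈ M) (ha : a ∈ D) (haT : a ∈ T) : ExposablePair G M D T a b := by
  refine ⟨(hM.1.1 hab).ne, _, (hM.isMatchingOn_inter_sym2 hD).sdiff_edge ⟨hab, ha, hD hab ha⟩,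
    fun e ⟨heM, he⟩ => ⟨⟨heM, ?_⟩, ?_⟩⟩
  · exact Set.mem_sym2_iff_subset.mpr ((Set.mem_sym2_iff_subset.mp he).trans Set.sdiff_subset)
  · rintro rfl
    exact (Set.mk_mem_sym2_iff.mp he).1.2 haT

lemma ExposablePair.exchange {w w₁ w₂ z : V} (h : ExposablePair G M D T w₂ z)
    (hM : s(w, w₁) ∈ M) (h₁₂ : G.Adj w₁ w₂) (hw : w ∈ D \ T) (hw₁ : w₁ ∈ D \ T) (hw₂ : w₂ ∈ D) :
    ExposablePair G M D (insert w (insert w₁ T)) w z := by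
  obtain ⟨hw₂z, N, hN, hMN⟩ := h
  have he : s(w, w₁) ∈ N := hMN ⟨hM, hw, hw₁⟩
  have hwN := hN.mem_of_mem he (Sym2.mem_mk_left w w₁)
  simp only [Set.mem_sdiff, Set.mem_insert_iff, Set.mem_singleton_iff, not_or] at hwN
  refine ⟨hwN.2.2, insert s(w₁, w₂) (N \ {s(w, w₁)}), ?_, ?_⟩
  · convert hN.exchange he h₁₂ (fun h => h.2 (Or.inl rfl)) using 1
    ext v
    by_cases hv : v = w₂ <;> simp_all [eq_comm]
    tauto
  · rintro e ⟨heM, he'⟩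
    refine Set.mem_insert_of_mem _ ⟨hMN ⟨heM, ?_⟩, ?_⟩
    · exact Set.mem_sym2_iff_subset.mpr ((Set.mem_sym2_iff_subset.mp he').trans
        (Set.sdiff_subset_sdiff_right (by intro; simp +contextual)))
    · rintro rfl
      exact (Set.mk_mem_sym2_iff.mp he').1.2 (Or.inl rfl)

lemma exposablePair_of_saturated (hM : IsPerfectMatchingSet G M) (hD : IsClosedUnder M D)
    {x y : V} {q : G.Walk x y} (hq : q.IsPath) (hqcov : ∀ v ∈ q.support, q.MCovers M v)
    (hqD : ∀ v ∈ q.support, v ∈ D) :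
    ∀ w ∈ q.support, ∃ z ∈ ({x, y} : Set V), ExposablePair G M D {v | v ∈ q.support} w z := by
  induction hn : q.length using Nat.strong_induction_on generalizing x with
  | _ n ih =>
  obtain ⟨a, h₁, q', rfl, hxa⟩ := hq.eq_cons_of_mCovers_start (hqcov x (start_mem_support q))
  have hxD := hqD x (start_mem_support _)
  cases q' with
  | nil =>
    have hpair := exposablePair_of_mem (T := {v | v ∈ (cons h₁ nil).support}) hM hD hxa hxD
      (start_mem_support _)
    intro w hw
    simp only [support_cons, support_nil, List.mem_cons, List.not_mem_nil, or_false] at hw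
    rcases hw with rfl | rfl
    exacts [⟨y, by simp, hpair⟩, ⟨x, by simp, hpair.symm⟩]
  | @cons _ b _ h₂ q₂ =>
    have hpath := (cons_isPath_iff _ _).mp hq
    have hsupp : ∀ v ∈ q₂.support, v ∈ (cons h₁ (cons h₂ q₂)).support := fun v hv =>
      List.mem_cons_of_mem _ (List.mem_cons_of_mem _ hv)
    have ih₂ := ih q₂.length (by simp [← hn]) ((cons_isPath_iff _ _).mp hpath.1).1
      (fun v hv => hq.mCovers_of_cons_cons hM.1.2 hxa hv (hqcov v (hsupp v hv)))
      (fun v hv => hqD v (hsupp v hv)) rfl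
    have hT : insert x (insert a {v | v ∈ q₂.support}) =
        {v | v ∈ (cons h₁ (cons h₂ q₂)).support} := by
      ext v
      simp
    have hshift : ∀ {w}, ExposablePair G M D {v | v ∈ q₂.support} b w →
        ExposablePair G M D {v | v ∈ (cons h₁ (cons h₂ q₂)).support} x w := fun h => hT ▸
      h.exchange hxa h₂ ⟨hxD, fun h => hpath.2 (List.mem_cons_of_mem _ h)⟩
        ⟨hqD a (by simp), ((cons_isPath_iff _ _).mp hpath.1).2⟩ (hqD b (by simp))
    intro w hw
    simp only [support_cons, List.mem_cons] at hw
    rcases hw with rfl | rfl | hw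
    · obtain ⟨z, hz, hbz⟩ := ih₂ b (start_mem_support _)
      obtain rfl : z = y := by simpa [hbz.1.symm] using hz
      exact ⟨z, by simp, hshift hbz⟩
    · exact ⟨x, by simp, (exposablePair_of_mem hM hD hxa hxD (start_mem_support _)).symm⟩
    · obtain ⟨z, hz, hwz⟩ := ih₂ w hw
      rcases hz with rfl | rfl
      · exact ⟨x, by simp, (hshift hwz.symm).symm⟩
      · exact ⟨z, by simp, hwz.mono fun v hv => hsupp v hv⟩

lemma exposablePair_of_isMAltPath {Q Z : Set V} (hM : DisjointEdges M) (hQ : IsClosedUnder M Q)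
    (hbase : ∀ t ∈ Q, ∃ z ∈ Z, ExposablePair G M D Q t z) {w t : V} {W : G.Walk w t}
    (hW : W.IsMAltPath M) (ht : t ∈ Q) (hWD : ∀ v ∈ W.support, v ∈ D) :
    ∃ z ∈ Z, ExposablePair G M D (Q ∪ {v | v ∈ W.support}) w z := by
  induction hn : W.length using Nat.strong_induction_on generalizing w with
  | _ n ih =>
  by_cases hwQ : w ∈ Q
  · obtain ⟨z, hz, hwz⟩ := hbase w hwQ
    exact ⟨z, hz, hwz.mono Set.subset_union_left⟩
  obtain ⟨w₁, w₂, h₁, h₂, W', rfl, hw₁M, hw₁Q, hW'⟩ := hW.eq_cons_cons hM hQ ht hwQ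
  have hsupp : ∀ v ∈ W'.support, v ∈ (cons h₁ (cons h₂ W')).support := fun v hv =>
    List.mem_cons_of_mem _ (List.mem_cons_of_mem _ hv)
  obtain ⟨z, hz, hw₂z⟩ := ih W'.length (by simp [← hn]) hW' (fun v hv => hWD v (hsupp v hv)) rfl
  have hpath := (cons_isPath_iff _ _).mp hW.1
  have hw' : w ∉ W'.support := fun h => hpath.2 (List.mem_cons_of_mem _ h)
  have hw₁' : w₁ ∉ W'.support := ((cons_isPath_iff _ _).mp hpath.1).2
  refine ⟨z, hz, (hw₂z.exchange hw₁M h₂ ⟨hWD w (by simp), ?_⟩ ⟨hWD w₁ (by simp), ?_⟩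
    (hWD w₂ (hsupp w₂ (start_mem_support _)))).mono ?_⟩
  · simp [hwQ, hw']
  · simp [hw₁Q, hw₁']
  · intro v
    simp +contextual [or_imp]

lemma IsPerfectMatchingSet.exists_isMatchingOn_sUnion_sdiff_pair [Finite V]
    (hM : IsPerfectMatchingSet G M) {x y : V} {q : G.Walk x y} (hq : q.IsPath)
    (hqcov : ∀ v ∈ q.support, q.MCovers M v) {𝒞 : Set (Set V)}
    (h𝒞 : ∀ C ∈ 𝒞, IsFactorComponent G C ∧ ∃ t ∈ q.support, t ∈ C)
    (hq𝒞 : ∀ v ∈ q.support, v ∈ ⋃₀ 𝒞) :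
    ∀ w ∈ ⋃₀ 𝒞, ∃ z ∈ ({x, y} : Set V), z ≠ w ∧ ∃ N, IsMatchingOn G N (⋃₀ 𝒞 \ {w, z}) := by
  rintro w ⟨C, hC, hwC⟩
  obtain ⟨⟨c, rfl⟩, t, htq, htc⟩ := h𝒞 C hC
  obtain ⟨W, hW, hWc⟩ := hM.exists_isMAltPath hwC htc
  have hbase := exposablePair_of_saturated hM (hM.isClosedUnder_sUnion fun C hC => (h𝒞 C hC).1)
    hq hqcov hq𝒞
  obtain ⟨z, hz, hwz, N, hN, -⟩ := exposablePair_of_isMAltPath hM.1.2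
    (isClosedUnder_support hM.1.2 hqcov) hbase hW htq fun v hv => ⟨_, hC, hWc v hv⟩
  exact ⟨z, hz, hwz.symm, N, hN⟩

end Ear

section Contraction

variable {G : SimpleGraph V} {X D S : Set V}

open Classical in
/-- Vertices outside `Y \ S`, not only those of `S`, are sent to the contracted vertex `none`. -/
noncomputable def contractProj (Y S : Set V) (v : V) : Option ↥(Y \ S) :=
  if h : v ∈ Y \ S then some ⟨v, h⟩ else none

lemma contractProj_of_mem {Y : Set V} {v : V} (h : v ∈ Y \ S) :
    contractProj Y S v = some ⟨v, h⟩ :=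
  dif_pos h

lemma contractProj_injOn (Y : Set V) : Set.InjOn (contractProj Y S) (Y \ S) := fun a ha b hb h => by
  simpa [contractProj_of_mem ha, contractProj_of_mem hb] using h

lemma contractOn_adj_contractProj {Y : Set V} {a b : V} (ha : a ∈ Y) (hb : b ∈ Y \ S)
    (hab : G.Adj a b) : (contractOn G Y S).Adj (contractProj Y S a) (contractProj Y S b) := by
  rw [contractProj_of_mem hb]
  by_cases haS : a ∈ S
  · rw [contractProj, dif_neg fun h => h.2 haS]
    exact ⟨a, haS, hab.symm⟩
  · rw [contractProj_of_mem ⟨ha, haS⟩]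
    exact hab

def contractOnInclusion (X D S : Set V) : Option ↥(X \ S) → Option ↥((X ∪ D) \ S) :=
  Option.map (Set.inclusion (Set.sdiff_subset_sdiff_left Set.subset_union_left))

lemma contractOnInclusion_injective : Function.Injective (contractOnInclusion X D S) :=
  Option.map_injective (Set.inclusion_injective _)

lemma contractOn_adj_contractOnInclusion {a b : Option ↥(X \ S)} (h : (contractOn G X S).Adj a b) :
    (contractOn G (X ∪ D) S).Adj (contractOnInclusion X D S a) (contractOnInclusion X D S b) := by
  rcases a with _ | a <;> rcases b with _ | b <;> exact h

lemma contractProj_mem_range {u : V} (hu : u ∈ X) :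
    contractProj (X ∪ D) S u ∈ Set.range (contractOnInclusion X D S) := by
  by_cases huS : u ∈ S
  · refine ⟨none, ?_⟩
    rw [contractProj, dif_neg fun h => h.2 huS]
    rfl
  · exact ⟨some ⟨u, hu, huS⟩, by rw [contractProj_of_mem]; rfl⟩

lemma IsMatchingOn.image_contractProj {Y : Set V} {N : Set (Sym2 V)} (hN : IsMatchingOn G N D)
    (hDY : D ⊆ Y \ S) :
    IsMatchingOn (contractOn G Y S) (Sym2.map (contractProj Y S) '' N) (contractProj Y S '' D) :=
  hN.image ((contractProj_injOn Y).mono hDY) fun _ ha _ hb =>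
    contractOn_adj_contractProj (hDY ha).1 (hDY hb)

lemma IsMatchingOn.image_contractOnInclusion {N : Set (Sym2 (Option ↥(X \ S)))}
    {A : Set (Option ↥(X \ S))} (hN : IsMatchingOn (contractOn G X S) N A) :
    IsMatchingOn (contractOn G (X ∪ D) S) (Sym2.map (contractOnInclusion X D S) '' N)
      (contractOnInclusion X D S '' A) :=
  hN.image contractOnInclusion_injective.injOn fun _ _ _ _ => contractOn_adj_contractOnInclusion

lemma range_contractOnInclusion_union_image_contractProj :
    Set.range (contractOnInclusion X D S) ∪ contractProj (X ∪ D) S '' D = Set.univ := by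
  refine Set.eq_univ_of_forall fun
    | none => Or.inl ⟨none, rfl⟩
    | some ⟨v, hvY, hvS⟩ => ?_
  rcases hvY with hvX | hvD
  · exact Or.inl ⟨some ⟨v, hvX, hvS⟩, rfl⟩
  · exact Or.inr ⟨v, hvD, contractProj_of_mem _⟩

lemma disjoint_range_contractOnInclusion_image_contractProj (hXD : Disjoint X D)
    (hDY : D ⊆ (X ∪ D) \ S) :
    Disjoint (Set.range (contractOnInclusion X D S)) (contractProj (X ∪ D) S '' D) := by
  rw [Set.disjoint_left]
  rintro _ ⟨a, rfl⟩ ⟨w, hw, hwa⟩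
  rcases a with _ | ⟨a, haX, _⟩
  · simp [contractOnInclusion, contractProj_of_mem (hDY hw)] at hwa
  · simp only [contractProj_of_mem (hDY hw), contractOnInclusion, Option.map_some,
      Option.some.injEq, Subtype.ext_iff] at hwa
    exact hXD.notMem_of_mem_left haX (hwa ▸ hw)

theorem factorCritical_contractOn_union (hX : FactorCritical (contractOn G X S))
    (hXD : Disjoint X D) (hSX : S ⊆ X) (hD : ∃ N, IsMatchingOn G N D)
    (hear : ∀ w ∈ D, ∃ z ∈ D, z ≠ w ∧ (∃ u ∈ X, G.Adj u z) ∧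
      ∃ N, IsMatchingOn G N (D \ {w, z})) :
    FactorCritical (contractOn G (X ∪ D) S) := by
  set ι := contractOnInclusion X D S
  set φ := contractProj (X ∪ D) S
  have hDY : D ⊆ (X ∪ D) \ S := fun w hw =>
    ⟨Or.inr hw, fun h => hXD.notMem_of_mem_right hw (hSX h)⟩
  have hφ : Set.InjOn φ D := (contractProj_injOn _).mono hDY
  have hA : ∀ a ∈ Set.range ι,
      ∃ N, IsMatchingOn (contractOn G (X ∪ D) S) N (Set.range ι \ {a}) := by
    rintro _ ⟨b, rfl⟩
    obtain ⟨N, hN⟩ := hasPMOn_iff.mp (hX b)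
    rw [← Set.image_singleton, ← Set.image_compl_eq_range_sdiff_image contractOnInclusion_injective]
    exact ⟨_, hN.image_contractOnInclusion⟩
  have hear' : ∀ b ∈ φ '' D, ∃ z ∈ φ '' D, z ≠ b ∧
      (∃ a ∈ Set.range ι, (contractOn G (X ∪ D) S).Adj a z) ∧
      ∃ N, IsMatchingOn (contractOn G (X ∪ D) S) N (φ '' D \ {b, z}) := by
    rintro _ ⟨w, hw, rfl⟩
    obtain ⟨z, hz, hzw, ⟨u, hu, huz⟩, N, hN⟩ := hear w hw
    refine ⟨φ z, ⟨z, hz, rfl⟩, fun h => hzw (hφ hz hw h),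
      ⟨φ u, contractProj_mem_range hu, contractOn_adj_contractProj (Or.inl hu) (hDY hz) huz⟩, ?_⟩
    rw [← Set.image_pair, ← hφ.image_sdiff_subset (Set.pair_subset hw hz)]
    exact ⟨_, hN.image_contractProj (Set.sdiff_subset.trans hDY)⟩
  have hcover := range_contractOnInclusion_union_image_contractProj (X := X) (D := D) (S := S)
  intro c
  obtain ⟨N, hN⟩ := exists_isMatchingOn_union_sdiff_singleton
    (disjoint_range_contractOnInclusion_image_contractProj hXD hDY) hA
    (let ⟨_, hN⟩ := hD; ⟨_, hN.image_contractProj hDY⟩) hear' c (hcover ▸ Set.mem_univ c)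
  rw [hcover] at hN
  exact hasPMOn_iff.mpr ⟨N, by simpa [Set.compl_eq_univ_sdiff] using hN⟩

end Contraction

section Separating

variable {G : SimpleGraph V} {X : Set V} {𝒞 : Set (Set V)}

lemma Separating.union_sUnion (hX : Separating G X) (h𝒞 : ∀ C ∈ 𝒞, IsFactorComponent G C) :
    Separating G (X ∪ ⋃₀ 𝒞) := by
  intro C hC
  rcases hX C hC with hCX | hCX
  · exact Or.inl (hCX.trans Set.subset_union_left)
  by_cases hC𝒞 : C ∈ 𝒞
  · exact Or.inl ((Set.subset_sUnion_of_mem hC𝒞).trans Set.subset_union_right)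
  refine Or.inr (Set.disjoint_union_right.mpr ⟨hCX, Set.disjoint_sUnion_right.mpr fun C' hC' => ?_⟩)
  obtain ⟨c, rfl⟩ := hC
  obtain ⟨c', rfl⟩ := h𝒞 C' hC'
  exact pairwise_disjoint_supp_connectedComponent _ fun hcc' => hC𝒞 (hcc' ▸ hC')

lemma Separating.disjoint_sUnion (hX : Separating G X)
    (h𝒞 : ∀ C ∈ 𝒞, IsFactorComponent G C ∧ ¬C ⊆ X) : Disjoint X (⋃₀ 𝒞) :=
  Set.disjoint_sUnion_right.mpr fun C hC =>
    ((hX C (h𝒞 C hC).1).resolve_left (h𝒞 C hC).2).symm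

end Separating

open SimpleGraph.Walk in
theorem statement_9_general {V : Type*} [Fintype V] (G : SimpleGraph V)
    (M : Set (Sym2 V)) (hM : IsPerfectMatchingSet G M)
    (C1 : Set V)
    (X : Set V) (hX : CriticalInducing G C1 X)
    (u v : V) (p : G.Walk u v) (hp : IsMEar G M X p) :
    CriticalInducing G C1
      (X ∪ ⋃₀ {C : Set V | IsFactorComponent G C ∧ ∃ w ∈ p.support, w ∉ X ∧ w ∈ C}) := by
  obtain ⟨hSep, hC1X, hFC⟩ := hX
  obtain ⟨huX, hvX, -, x, y, hux, q, hyv, rfl, ⟨hq, -, hqcov⟩, hqX⟩ := hp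
  set 𝒞 := {C : Set V | IsFactorComponent G C ∧
    ∃ w ∈ (cons hux (q.concat hyv)).support, w ∉ X ∧ w ∈ C}
  have h𝒞 : ∀ C ∈ 𝒞, IsFactorComponent G C ∧ ∃ t ∈ q.support, t ∈ C := by
    rintro C ⟨hC, w, hw, hwX, hwC⟩
    simp only [support_cons, support_concat, List.mem_cons, List.mem_append, List.not_mem_nil,
      or_false] at hw
    rcases hw with rfl | hw | rfl
    exacts [absurd huX hwX, ⟨hC, w, hw, hwC⟩, absurd hvX hwX]
  have hq𝒞 : ∀ t ∈ q.support, t ∈ ⋃₀ 𝒞 := fun t ht =>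
    ⟨_, ⟨⟨_, rfl⟩, t, by simp [support_concat, ht], hqX t ht, rfl⟩, rfl⟩
  refine ⟨hSep.union_sUnion fun C hC => hC.1, hC1X.trans Set.subset_union_left,
    factorCritical_contractOn_union hFC
      (hSep.disjoint_sUnion fun C ⟨hC, w, _, hwX, hwC⟩ => ⟨hC, fun h => hwX (h hwC)⟩) hC1X
      ⟨_, hM.isMatchingOn_inter_sym2 (hM.isClosedUnder_sUnion fun C hC => hC.1)⟩ fun w hw => ?_⟩
  obtain ⟨z, hz, hzw, hN⟩ := hM.exists_isMatchingOn_sUnion_sdiff_pair hq hqcov h𝒞 hq𝒞 w hw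
  rcases hz with rfl | rfl
  · exact ⟨z, hq𝒞 z (start_mem_support q), hzw, ⟨u, huX, hux⟩, hN⟩
  · exact ⟨z, hq𝒞 z (end_mem_support q), hzw, ⟨v, hvX, hyv.symm⟩, hN⟩

/-- Let `G` be factorizable with perfect matching `M`, `G1` a
factor-component, and `X` a critical-inducing set for `G1`. If there is an `M`-ear `P`
relative to `X`, and `I1, …, Is` are the factor-components containing internal vertices
of `P`, then `X ∪ V(I1) ∪ ⋯ ∪ V(Is)` is also a critical-inducing set for `G1`. -/
theorem statement_9 {V : Type*} [Fintype V] (G : SimpleGraph V) (hG : Factorizable G)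
    (M : Set (Sym2 V)) (hM : IsPerfectMatchingSet G M)
    (C1 : Set V) (hC1 : IsFactorComponent G C1)
    (X : Set V) (hX : CriticalInducing G C1 X)
    (u v : V) (p : G.Walk u v) (hp : IsMEar G M X p) :
    CriticalInducing G C1
      (X ∪ ⋃₀ {C : Set V | IsFactorComponent G C ∧ ∃ w ∈ p.support, w ∉ X ∧ w ∈ C}) :=
  statement_9_general G M hM C1 X hX u v p hp
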